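/- arXiv:1910.01922 — 3 statements merged into one kernel-verified Lean document; each statement's English description precedes it below -/
import Mathlib

section
/- Let (M_k) be a sequence of positive reals satisfying condition (M.2): there exist A ≥ 1 and H > 0 with M_{2k} ≤ A H^{2k} M_k^2 for all k, together with M_0 = 1, log-convexity M_k² ≤ M_{k-1}M_{k+1}, and stability M_{k+1} ≤ A H^k M_k. Then for every r > 0 the associated function satisfies 2 M(r/H) ≤ M(r) + log A, where M(r) = sup_k log(r^k/M_k). -/
/-!
Each term of `2 M(r/H)` is controlled by the term of index `2k` of `M(r)`: squaring
`(r/H)^k / M_k` and using (M.2) gives `((r/H)^k / M_k)^2 ≤ A · r^{2k} / M_{2k}`.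
-/

/-- The associated function of a sequence `(M_k)`, valued in the extended reals:
`M(r) = sup_k log (r^k / M_k)`. -/
noncomputable def assocFnE (M : ℕ → ℝ) (r : ℝ) : EReal :=
  ⨆ k : ℕ, ((Real.log (r ^ k / M k) : EReal))

theorem EReal.mul_iSup_le {ι : Sort*} {a c : EReal} {f : ι → EReal} (ha : 0 < a) (ha' : a ≠ ⊤)
    (h : ∀ i, a * f i ≤ c) : a * ⨆ i, f i ≤ c := by
  rw [mul_comm, ← EReal.le_div_iff_mul_le ha ha']
  exact iSup_le fun i => (EReal.le_div_iff_mul_le ha ha').2 (mul_comm a (f i) ▸ h i)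

theorem log_le_assocFnE (M : ℕ → ℝ) (r : ℝ) (k : ℕ) :
    (Real.log (r ^ k / M k) : EReal) ≤ assocFnE M r :=
  le_iSup (fun j => (Real.log (r ^ j / M j) : EReal)) k

theorem sq_div_le_mul_div_of_le_mul_sq {A H r a b : ℝ} {k : ℕ} (hH : 0 < H)
    (ha : 0 < a) (hb : 0 < b) (hba : b ≤ A * H ^ (2 * k) * a ^ 2) :
    ((r / H) ^ k / a) ^ 2 ≤ A * (r ^ (2 * k) / b) := by
  have hsq : ((r / H) ^ k / a) ^ 2 = r ^ (2 * k) / (H ^ (2 * k) * a ^ 2) := by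
    rw [div_pow, ← pow_mul, div_pow, pow_mul']
    ring
  rw [hsq, mul_div_assoc', div_le_div_iff₀ (by positivity) hb]
  calc r ^ (2 * k) * b ≤ r ^ (2 * k) * (A * H ^ (2 * k) * a ^ 2) := by
        gcongr
        exact (even_two_mul k).pow_nonneg r
    _ = A * r ^ (2 * k) * (H ^ (2 * k) * a ^ 2) := by ring

theorem two_mul_log_le_log_add_log {A H r a b : ℝ} {k : ℕ} (hA : 0 < A) (hH : 0 < H)
    (hr : 0 < r) (ha : 0 < a) (hb : 0 < b) (hba : b ≤ A * H ^ (2 * k) * a ^ 2) :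
    2 * Real.log ((r / H) ^ k / a) ≤ Real.log (r ^ (2 * k) / b) + Real.log A := by
  rw [← Real.log_mul (by positivity) hA.ne', mul_comm _ A, show (2 : ℝ) = (2 : ℕ) by norm_num,
    ← Real.log_pow]
  exact Real.log_le_log (by positivity) (sq_div_le_mul_div_of_le_mul_sq hH ha hb hba)

theorem stmt_5_general (M : ℕ → ℝ) (A H : ℝ) (hA : 1 ≤ A) (hH : 0 < H)
    (hpos : ∀ k, 0 < M k)
    (hM2 : ∀ k, M (2 * k) ≤ A * H ^ (2 * k) * (M k) ^ 2) :
    ∀ r : ℝ, 0 < r →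
      2 * assocFnE M (r / H) ≤ assocFnE M r + ((Real.log A : ℝ) : EReal) := by
  intro r hr
  refine EReal.mul_iSup_le zero_lt_two (by decide) fun k => ?_
  have hterm : ((2 * Real.log ((r / H) ^ k / M k) : ℝ) : EReal)
      ≤ ((Real.log (r ^ (2 * k) / M (2 * k)) + Real.log A : ℝ) : EReal) :=
    EReal.coe_le_coe_iff.2 <| two_mul_log_le_log_add_log (zero_lt_one.trans_le hA) hH hr
      (hpos k) (hpos (2 * k)) (hM2 k)
  push_cast at hterm
  calc (2 : EReal) * (Real.log ((r / H) ^ k / M k) : EReal)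
      ≤ (Real.log (r ^ (2 * k) / M (2 * k)) : EReal) + (Real.log A : EReal) := hterm
    _ ≤ assocFnE M r + (Real.log A : EReal) := by
        gcongr
        exact log_le_assocFnE M r (2 * k)

theorem stmt_5 (M : ℕ → ℝ) (A H : ℝ) (hA : 1 ≤ A) (hH : 0 < H)
    (hpos : ∀ k, 0 < M k) (h0 : M 0 = 1)
    (hlc : ∀ k, (M (k + 1)) ^ 2 ≤ M k * M (k + 2))
    (hM1 : ∀ k, M (k + 1) ≤ A * H ^ k * M k)
    (hM2 : ∀ k, M (2 * k) ≤ A * H ^ (2 * k) * (M k) ^ 2) :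
    ∀ r : ℝ, 0 < r →
      2 * assocFnE M (r / H) ≤ assocFnE M r + ((Real.log A : ℝ) : EReal) :=
  stmt_5_general M A H hA hH hpos hM2
end

section
/- Fourier-coefficient model of Theorem 3.2 (sufficiency of the Diophantine condition for Roumieu solvability on the torus): let a ∈ ℝ and let M be the associated function of a sequence (M_k) satisfying (M.0)–(M.3) and (LC). Suppose that for every N > 0 there exists C_N > 0 such that |k + a m| ≥ C_N exp(−M(N(|k| + |m|))) for all (k,m) ∈ ℤ² with k + a m ≠ 0. Let (f_{km})_{(k,m)∈ℤ²} be complex numbers with f_{km} = 0 whenever k + am = 0, and suppose that for every N > 0 there is C > 0 with |f_{km}| ≤ C exp(M(N(|k|+|m|))) for all k, m. Define u_{km} = f_{km}/(i(k+am)) when k + am ≠ 0 and u_{km} = 0 otherwise. Then for every D > 0 there exists C_D > 0 with |u_{km}| ≤ C_D exp(M(D(|k|+|m|))) for all (k,m) ∈ ℤ². -/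
/-!
Dividing by `i (k + a m)` costs at most a factor `C⁻¹ exp (M (N (|k| + |m|)))` by the Diophantine
condition, so `|u_{km}| ≤ C' exp (2 M (N (|k| + |m|)))`. Condition (M.2) gives
`2 M (r) ≤ log A + M (H r)`, and choosing `N = D / H` turns the doubled exponent back into
`M (D (|k| + |m|))` at the price of the constant `A`.
By (M.3), `r ^ j / M_j ≤ C₀ exp (ℓ r)`, so the supremum defining `M` is finite.
-/

/-- The associated function `M(r) = sup_j log (r^j / M_j)` of a Komatsu sequence
(real-valued; finite under condition (M.3)). -/
noncomputable def assocFn (M : ℕ → ℝ) (r : ℝ) : ℝ :=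
  sSup {x : ℝ | ∃ j : ℕ, x = Real.log (r ^ j / M j)}

open Real

section AssocFn

variable (M : ℕ → ℝ)

lemma log_le_assocFn {r : ℝ} (hbdd : BddAbove {x : ℝ | ∃ j : ℕ, x = log (r ^ j / M j)})
    (j : ℕ) : log (r ^ j / M j) ≤ assocFn M r :=
  le_csSup hbdd ⟨j, rfl⟩

lemma assocFn_le {r c : ℝ} (h0 : M 0 = 1) (h : ∀ j, log (r ^ j / M j) ≤ c) :
    assocFn M r ≤ c :=
  csSup_le ⟨0, 0, by simp [h0]⟩ (by rintro x ⟨j, rfl⟩; exact h j)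

lemma assocFn_nonneg {r : ℝ} (h0 : M 0 = 1)
    (hbdd : BddAbove {x : ℝ | ∃ j : ℕ, x = log (r ^ j / M j)}) : 0 ≤ assocFn M r := by
  simpa [h0] using log_le_assocFn M hbdd 0

lemma pow_div_le_mul_exp {C₀ ℓ r : ℝ} (hpos : ∀ k, 0 < M k) (hC₀ : 0 ≤ C₀) (hℓ : 0 ≤ ℓ)
    (hM3 : ∀ k : ℕ, (k.factorial : ℝ) ≤ C₀ * ℓ ^ k * M k) (hr : 0 ≤ r) (j : ℕ) :
    r ^ j / M j ≤ C₀ * exp (ℓ * r) :=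
  calc r ^ j / M j ≤ C₀ * ((ℓ * r) ^ j / j.factorial) := by
        rw [mul_pow, div_le_iff₀ (hpos j), ← mul_div_assoc, div_mul_eq_mul_div,
          le_div_iff₀ (by positivity)]
        nlinarith [mul_le_mul_of_nonneg_left (hM3 j) (pow_nonneg hr j)]
    _ ≤ C₀ * exp (ℓ * r) :=
        mul_le_mul_of_nonneg_left (pow_div_factorial_le_exp _ (mul_nonneg hℓ hr) j) hC₀

lemma bddAbove_log_pow_div {C₀ ℓ r : ℝ} (hpos : ∀ k, 0 < M k) (hC₀ : 0 ≤ C₀) (hℓ : 0 ≤ ℓ)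
    (hM3 : ∀ k : ℕ, (k.factorial : ℝ) ≤ C₀ * ℓ ^ k * M k) (hr : 0 ≤ r) :
    BddAbove {x : ℝ | ∃ j : ℕ, x = log (r ^ j / M j)} := by
  refine ⟨C₀ * exp (ℓ * r), ?_⟩
  rintro x ⟨j, rfl⟩
  exact (log_le_self (div_nonneg (pow_nonneg hr j) (hpos j).le)).trans
    (pow_div_le_mul_exp M hpos hC₀ hℓ hM3 hr j)

lemma sq_pow_div_le {A H r : ℝ} (hpos : ∀ k, 0 < M k)
    (hM2 : ∀ k, M (2 * k) ≤ A * H ^ (2 * k) * (M k) ^ 2) (j : ℕ) :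
    (r ^ j / M j) ^ 2 ≤ A * ((H * r) ^ (2 * j) / M (2 * j)) := by
  rw [div_pow, mul_div_assoc', div_le_div_iff₀ (pow_pos (hpos j) 2) (hpos (2 * j)), mul_pow,
    ← pow_mul, mul_comm j 2]
  calc r ^ (2 * j) * M (2 * j) ≤ r ^ (2 * j) * (A * H ^ (2 * j) * M j ^ 2) :=
        mul_le_mul_of_nonneg_left (hM2 j) ((even_two_mul j).pow_nonneg r)
    _ = A * (H ^ (2 * j) * r ^ (2 * j)) * M j ^ 2 := by ring

lemma two_mul_assocFn_le {A H r : ℝ} (h0 : M 0 = 1) (hpos : ∀ k, 0 < M k) (hA : 1 ≤ A)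
    (hM2 : ∀ k, M (2 * k) ≤ A * H ^ (2 * k) * (M k) ^ 2) (hr : 0 ≤ r)
    (hbdd : BddAbove {x : ℝ | ∃ j : ℕ, x = log ((H * r) ^ j / M j)}) :
    2 * assocFn M r ≤ log A + assocFn M (H * r) := by
  suffices h : ∀ j, log (r ^ j / M j) ≤ (log A + assocFn M (H * r)) / 2 by
    linarith [assocFn_le M h0 h]
  intro j
  rw [le_div_iff₀' two_pos]
  have hsq := sq_pow_div_le M (r := r) hpos hM2 j
  rcases (div_nonneg (pow_nonneg hr j) (hpos j).le).eq_or_lt with hx | hx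
  · rw [← hx, log_zero]
    linarith [log_nonneg hA, assocFn_nonneg M h0 hbdd]
  · have hy : (H * r) ^ (2 * j) / M (2 * j) ≠ 0 := by
      intro hy
      rw [hy, mul_zero] at hsq
      linarith [pow_pos hx 2]
    calc 2 * log (r ^ j / M j) = log ((r ^ j / M j) ^ 2) := by rw [log_pow]; norm_num
      _ ≤ log (A * ((H * r) ^ (2 * j) / M (2 * j))) := log_le_log (by positivity) hsq
      _ = log A + log ((H * r) ^ (2 * j) / M (2 * j)) := log_mul (by positivity) hy
      _ ≤ log A + assocFn M (H * r) := by gcongr; exact log_le_assocFn M hbdd _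

end AssocFn

lemma norm_div_I_mul_ofReal (z : ℂ) (x : ℝ) : ‖z / (Complex.I * x)‖ = ‖z‖ / |x| := by
  rw [norm_div, norm_mul, Complex.norm_I, one_mul, Complex.norm_real, Real.norm_eq_abs]

theorem stmt_16_general (Mk : ℕ → ℝ) (A H ℓ C₀ : ℝ) (hA : 1 ≤ A) (hH : 0 < H)
    (hℓ : 0 < ℓ) (hC₀ : 0 < C₀)
    (hpos : ∀ k, 0 < Mk k) (h0 : Mk 0 = 1)
    (hM2 : ∀ k, Mk (2 * k) ≤ A * H ^ (2 * k) * (Mk k) ^ 2)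
    (hM3 : ∀ k : ℕ, (k.factorial : ℝ) ≤ C₀ * ℓ ^ k * Mk k)
    (a : ℝ)
    (hdioph : ∀ N : ℝ, 0 < N → ∃ C : ℝ, 0 < C ∧ ∀ k m : ℤ,
      (k : ℝ) + a * m ≠ 0 →
      C * Real.exp (-(assocFn Mk (N * (|(k : ℝ)| + |(m : ℝ)|)))) ≤ |(k : ℝ) + a * m|)
    (f : ℤ → ℤ → ℂ)
    (hf : ∀ N : ℝ, 0 < N → ∃ C : ℝ, 0 < C ∧ ∀ k m : ℤ,
      ‖f k m‖ ≤ C * Real.exp (assocFn Mk (N * (|(k : ℝ)| + |(m : ℝ)|))))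
    (u : ℤ → ℤ → ℂ)
    (hu : ∀ k m : ℤ, u k m =
      if (k : ℝ) + a * m = 0 then 0
      else f k m / (Complex.I * ((k : ℂ) + (a : ℂ) * (m : ℂ)))) :
    ∀ D : ℝ, 0 < D → ∃ C : ℝ, 0 < C ∧ ∀ k m : ℤ,
      ‖u k m‖ ≤ C * Real.exp (assocFn Mk (D * (|(k : ℝ)| + |(m : ℝ)|))) := by
  intro D hD
  have hN : 0 < D / H := div_pos hD hH
  obtain ⟨C₁, hC₁, hdioph⟩ := hdioph (D / H) hN
  obtain ⟨C₂, hC₂, hf⟩ := hf (D / H) hN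
  refine ⟨C₂ / C₁ * A, by positivity, fun k m => ?_⟩
  set r : ℝ := |(k : ℝ)| + |(m : ℝ)|
  set s := assocFn Mk (D / H * r)
  have hNr : 0 ≤ D / H * r := by positivity
  have hdouble : 2 * s ≤ log A + assocFn Mk (D * r) := by
    have := two_mul_assocFn_le Mk h0 hpos hA hM2 hNr
      (bddAbove_log_pow_div Mk hpos hC₀.le hℓ.le hM3 (by positivity))
    rwa [← mul_assoc, mul_div_cancel₀ D hH.ne'] at this
  rw [hu k m]
  split_ifs with hz
  · rw [norm_zero]; positivity
  · have hcast : (k : ℂ) + (a : ℂ) * (m : ℂ) = (((k : ℝ) + a * m : ℝ) : ℂ) := by push_cast; rfl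
    rw [hcast, norm_div_I_mul_ofReal]
    calc ‖f k m‖ / |(k : ℝ) + a * m| ≤ C₂ * exp s / (C₁ * exp (-s)) :=
          div_le_div₀ (by positivity) (hf k m) (by positivity) (hdioph k m hz)
      _ = C₂ / C₁ * exp (2 * s) := by
          rw [mul_div_mul_comm, ← exp_sub]; ring_nf
      _ ≤ C₂ / C₁ * exp (log A + assocFn Mk (D * r)) := by gcongr
      _ = C₂ / C₁ * A * exp (assocFn Mk (D * r)) := by
          rw [exp_add, exp_log (by positivity)]; ring

theorem stmt_16 (Mk : ℕ → ℝ) (A H ℓ C₀ : ℝ) (hA : 1 ≤ A) (hH : 0 < H)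
    (hℓ : 0 < ℓ) (hC₀ : 0 < C₀)
    (hpos : ∀ k, 0 < Mk k) (h0 : Mk 0 = 1)
    (hlc : ∀ k, (Mk (k + 1)) ^ 2 ≤ Mk k * Mk (k + 2))
    (hM1 : ∀ k, Mk (k + 1) ≤ A * H ^ k * Mk k)
    (hM2 : ∀ k, Mk (2 * k) ≤ A * H ^ (2 * k) * (Mk k) ^ 2)
    (hM3 : ∀ k : ℕ, (k.factorial : ℝ) ≤ C₀ * ℓ ^ k * Mk k)
    (a : ℝ)
    (hdioph : ∀ N : ℝ, 0 < N → ∃ C : ℝ, 0 < C ∧ ∀ k m : ℤ,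
      (k : ℝ) + a * m ≠ 0 →
      C * Real.exp (-(assocFn Mk (N * (|(k : ℝ)| + |(m : ℝ)|)))) ≤ |(k : ℝ) + a * m|)
    (f : ℤ → ℤ → ℂ)
    (hf0 : ∀ k m : ℤ, (k : ℝ) + a * m = 0 → f k m = 0)
    (hf : ∀ N : ℝ, 0 < N → ∃ C : ℝ, 0 < C ∧ ∀ k m : ℤ,
      ‖f k m‖ ≤ C * Real.exp (assocFn Mk (N * (|(k : ℝ)| + |(m : ℝ)|))))
    (u : ℤ → ℤ → ℂ)
    (hu : ∀ k m : ℤ, u k m =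
      if (k : ℝ) + a * m = 0 then 0
      else f k m / (Complex.I * ((k : ℂ) + (a : ℂ) * (m : ℂ)))) :
    ∀ D : ℝ, 0 < D → ∃ C : ℝ, 0 < C ∧ ∀ k m : ℤ,
      ‖u k m‖ ≤ C * Real.exp (assocFn Mk (D * (|(k : ℝ)| + |(m : ℝ)|))) :=
  stmt_16_general Mk A H ℓ C₀ hA hH hℓ hC₀ hpos h0 hM2 hM3 a hdioph f hf u hu
end

section
/- Fourier-coefficient model of Proposition 4.4 (sufficiency for Roumieu hypoellipticity on the torus): let a ∈ ℝ and M the associated function of a sequence satisfying (M.0)–(M.3), (LC), (M.2). Assume the set N = {(k,m) ∈ ℤ² : k + am = 0} is finite and for every N > 0 there exists C_N > 0 with |k + am| ≥ C_N exp(−M(N(|k|+|m|))) whenever k + am ≠ 0. Let (u_{km}) be complex numbers such that the sequence f_{km} := i(k+am) u_{km} satisfies: there exist C, N' > 0 with |f_{km}| ≤ C exp(−M(N'(|k|+|m|))) for all k,m, and also u_{km} is bounded polynomially. Then there exist C', N'' > 0 such that |u_{km}| ≤ C' exp(−M(N''(|k|+|m|))) for all (k,m) ∉ N. -/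
section AssocFn

variable {Mk : ℕ → ℝ} {A H ℓ C₀ r : ℝ}

/-- Under (M.3), `r^j / M_j ≤ C₀ (ℓ r)^j / j! ≤ C₀ exp(ℓ r)`. -/
lemma assocFn_bddAbove (hℓ : 0 < ℓ) (hC₀ : 0 < C₀) (hpos : ∀ k, 0 < Mk k)
    (hM3 : ∀ k : ℕ, (k.factorial : ℝ) ≤ C₀ * ℓ ^ k * Mk k) (hr : 0 < r) :
    BddAbove {x : ℝ | ∃ j : ℕ, x = Real.log (r ^ j / Mk j)} := by
  refine ⟨Real.log (C₀ * Real.exp (ℓ * r)), ?_⟩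
  rintro x ⟨j, rfl⟩
  refine Real.log_le_log (by have := hpos j; positivity) ?_
  calc r ^ j / Mk j ≤ C₀ * ℓ ^ j * r ^ j / j.factorial := by
        rw [div_le_div_iff₀ (hpos j) (by positivity)]
        have := mul_le_mul_of_nonneg_left (hM3 j) (pow_pos hr j).le
        linarith
    _ = C₀ * ((ℓ * r) ^ j / j.factorial) := by ring
    _ ≤ C₀ * Real.exp (ℓ * r) := by
        gcongr
        exact Real.pow_div_factorial_le_exp _ (by positivity) j

lemma sq_div_le_of_M2 (hH : 0 < H) (hpos : ∀ k, 0 < Mk k)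
    (hM2 : ∀ k, Mk (2 * k) ≤ A * H ^ (2 * k) * Mk k ^ 2) (hr : 0 ≤ r) (j : ℕ) :
    ((r / H) ^ j / Mk j) ^ 2 ≤ A * (r ^ (2 * j) / Mk (2 * j)) := by
  have hMj := hpos j
  have hM2j := hpos (2 * j)
  rw [div_pow, ← pow_mul, mul_comm j 2, div_pow, mul_div_assoc', le_div_iff₀ hM2j,
    div_mul_eq_mul_div, div_le_iff₀ (by positivity), div_mul_eq_mul_div,
    div_le_iff₀ (by positivity)]
  have := mul_le_mul_of_nonneg_left (hM2 j) (pow_nonneg hr (2 * j))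
  nlinarith [pow_pos hH (2 * j)]

lemma two_mul_assocFn_div_le (hA : 0 < A) (hH : 0 < H) (hℓ : 0 < ℓ) (hC₀ : 0 < C₀)
    (hpos : ∀ k, 0 < Mk k) (hM2 : ∀ k, Mk (2 * k) ≤ A * H ^ (2 * k) * Mk k ^ 2)
    (hM3 : ∀ k : ℕ, (k.factorial : ℝ) ≤ C₀ * ℓ ^ k * Mk k) (hr : 0 < r) :
    2 * assocFn Mk (r / H) ≤ assocFn Mk r + Real.log A := by
  suffices assocFn Mk (r / H) ≤ (assocFn Mk r + Real.log A) / 2 by linarith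
  refine csSup_le ⟨_, 0, rfl⟩ ?_
  rintro x ⟨j, rfl⟩
  have hterm : 0 < (r / H) ^ j / Mk j := by have := hpos j; positivity
  have hsup : Real.log (r ^ (2 * j) / Mk (2 * j)) ≤ assocFn Mk r :=
    le_csSup (assocFn_bddAbove hℓ hC₀ hpos hM3 hr) ⟨2 * j, rfl⟩
  have hlog : 2 * Real.log ((r / H) ^ j / Mk j)
      ≤ Real.log A + Real.log (r ^ (2 * j) / Mk (2 * j)) := by
    rw [← Real.log_mul hA.ne' (by have := hpos (2 * j); positivity), ← Nat.cast_ofNat,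
      ← Real.log_pow]
    exact Real.log_le_log (by positivity) (sq_div_le_of_M2 hH hpos hM2 hr.le j)
  linarith

end AssocFn

lemma le_mul_exp_of_mul_le {A C c d v x y : ℝ} (hA : 0 < A) (hc : 0 < c)
    (hxy : 2 * y ≤ x + Real.log A) (hd : c * Real.exp (-y) ≤ d) (hv : 0 ≤ v)
    (hdv : d * v ≤ C * Real.exp (-x)) :
    v ≤ C * A / c * Real.exp (-y) := by
  have hx : Real.exp (-x) ≤ A * Real.exp (-y) * Real.exp (-y) := by
    rw [← Real.exp_log hA, ← Real.exp_add, ← Real.exp_add]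
    exact Real.exp_le_exp.mpr (by linarith)
  have hcv : c * Real.exp (-y) * v ≤ C * A * Real.exp (-y) * Real.exp (-y) := by
    have hC : 0 ≤ C := by
      refine nonneg_of_mul_nonneg_left ?_ (Real.exp_pos (-x))
      have hd0 : 0 ≤ d := le_trans (by positivity) hd
      exact (mul_nonneg hd0 hv).trans hdv
    nlinarith [mul_le_mul_of_nonneg_right hd hv, mul_le_mul_of_nonneg_left hx hC]
  rw [div_mul_eq_mul_div, le_div_iff₀ hc]
  have := Real.exp_pos (-y)
  nlinarith

lemma abs_add_abs_pos_of_add_mul_ne_zero {k m : ℤ} {a : ℝ} (h : (k : ℝ) + a * m ≠ 0) :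
    0 < |(k : ℝ)| + |(m : ℝ)| := by
  by_contra! hρ
  have hk : (k : ℝ) = 0 := abs_nonpos_iff.mp (by linarith [abs_nonneg (m : ℝ)])
  have hm : (m : ℝ) = 0 := abs_nonpos_iff.mp (by linarith [abs_nonneg (k : ℝ)])
  simp [hk, hm] at h

theorem stmt_17_general (Mk : ℕ → ℝ) (A H ℓ C₀ : ℝ) (hA : 1 ≤ A) (hH : 0 < H)
    (hℓ : 0 < ℓ) (hC₀ : 0 < C₀)
    (hpos : ∀ k, 0 < Mk k)
    (hM2 : ∀ k, Mk (2 * k) ≤ A * H ^ (2 * k) * (Mk k) ^ 2)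
    (hM3 : ∀ k : ℕ, (k.factorial : ℝ) ≤ C₀ * ℓ ^ k * Mk k)
    (a : ℝ)
    (hdioph : ∀ N : ℝ, 0 < N → ∃ C : ℝ, 0 < C ∧ ∀ k m : ℤ,
      (k : ℝ) + a * m ≠ 0 →
      C * Real.exp (-(assocFn Mk (N * (|(k : ℝ)| + |(m : ℝ)|)))) ≤ |(k : ℝ) + a * m|)
    (u : ℤ → ℤ → ℂ)
    (hf : ∃ C N' : ℝ, 0 < C ∧ 0 < N' ∧ ∀ k m : ℤ,
      ‖Complex.I * ((k : ℂ) + (a : ℂ) * (m : ℂ)) * u k m‖ ≤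
        C * Real.exp (-(assocFn Mk (N' * (|(k : ℝ)| + |(m : ℝ)|))))) :
    ∃ C' N'' : ℝ, 0 < C' ∧ 0 < N'' ∧ ∀ k m : ℤ,
      (k : ℝ) + a * m ≠ 0 →
      ‖u k m‖ ≤ C' * Real.exp (-(assocFn Mk (N'' * (|(k : ℝ)| + |(m : ℝ)|)))) := by
  obtain ⟨C, N', hC, hN', hf⟩ := hf
  obtain ⟨c, hc, hdioph⟩ := hdioph (N' / H) (by positivity)
  refine ⟨C * A / c, N' / H, by positivity, by positivity, fun k m hkm => ?_⟩
  have hρ := abs_add_abs_pos_of_add_mul_ne_zero hkm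
  have hnorm : ‖Complex.I * ((k : ℂ) + (a : ℂ) * (m : ℂ)) * u k m‖
      = |(k : ℝ) + a * m| * ‖u k m‖ := by
    rw [norm_mul, norm_mul, Complex.norm_I, one_mul, ← Real.norm_eq_abs, ← Complex.norm_real]
    push_cast
    rfl
  refine le_mul_exp_of_mul_le (by linarith) hc ?_ (hdioph k m hkm) (norm_nonneg _)
    (hnorm ▸ hf k m)
  rw [div_mul_eq_mul_div]
  exact two_mul_assocFn_div_le (by linarith) hH hℓ hC₀ hpos hM2 hM3 (by positivity)

theorem stmt_17 (Mk : ℕ → ℝ) (A H ℓ C₀ : ℝ) (hA : 1 ≤ A) (hH : 0 < H)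
    (hℓ : 0 < ℓ) (hC₀ : 0 < C₀)
    (hpos : ∀ k, 0 < Mk k) (h0 : Mk 0 = 1)
    (hlc : ∀ k, (Mk (k + 1)) ^ 2 ≤ Mk k * Mk (k + 2))
    (hM1 : ∀ k, Mk (k + 1) ≤ A * H ^ k * Mk k)
    (hM2 : ∀ k, Mk (2 * k) ≤ A * H ^ (2 * k) * (Mk k) ^ 2)
    (hM3 : ∀ k : ℕ, (k.factorial : ℝ) ≤ C₀ * ℓ ^ k * Mk k)
    (a : ℝ)
    (hfin : Set.Finite {p : ℤ × ℤ | (p.1 : ℝ) + a * p.2 = 0})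
    (hdioph : ∀ N : ℝ, 0 < N → ∃ C : ℝ, 0 < C ∧ ∀ k m : ℤ,
      (k : ℝ) + a * m ≠ 0 →
      C * Real.exp (-(assocFn Mk (N * (|(k : ℝ)| + |(m : ℝ)|)))) ≤ |(k : ℝ) + a * m|)
    (u : ℤ → ℤ → ℂ)
    (hf : ∃ C N' : ℝ, 0 < C ∧ 0 < N' ∧ ∀ k m : ℤ,
      ‖Complex.I * ((k : ℂ) + (a : ℂ) * (m : ℂ)) * u k m‖ ≤
        C * Real.exp (-(assocFn Mk (N' * (|(k : ℝ)| + |(m : ℝ)|)))))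
    (hpoly : ∃ C : ℝ, ∃ p : ℕ, ∀ k m : ℤ,
      ‖u k m‖ ≤ C * (1 + |(k : ℝ)| + |(m : ℝ)|) ^ p) :
    ∃ C' N'' : ℝ, 0 < C' ∧ 0 < N'' ∧ ∀ k m : ℤ,
      (k : ℝ) + a * m ≠ 0 →
      ‖u k m‖ ≤ C' * Real.exp (-(assocFn Mk (N'' * (|(k : ℝ)| + |(m : ℝ)|)))) :=
  stmt_17_general Mk A H ℓ C₀ hA hH hℓ hC₀ hpos hM2 hM3 a hdioph u hf
end
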